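/- Let ρ and σ be density operators with σ of full support, and let m, k ≥ 0 with the property that there exist: an operator Λ with 0 ≤ Λ ≤ I, Tr[Λσ] ≤ 2^{−m}, and a density operator ρ̃ with ρ̃ ≤ 2^k σ. If additionally ε₁ := 1 − Tr[Λρ] and ε₂ := (1/2)‖ρ̃ − ρ‖₁ satisfy ε₁ + ε₂ < 1, then m ≤ k + log₂(1/(1 − ε₁ − ε₂)). -/

import Mathlib

open Matrix ComplexOrder

noncomputable def traceNorm {n : ℕ} (X : Matrix (Fin n) (Fin n) ℂ) : ℝ :=
  (((Matrix.posSemidef_conjTranspose_mul_self X).1.eigenvectorUnitary.1 *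
      diagonal ((fun x : ℝ => (x : ℂ)) ∘ (√·) ∘ (Matrix.posSemidef_conjTranspose_mul_self X).1.eigenvalues) *
      (star (Matrix.posSemidef_conjTranspose_mul_self X).1.eigenvectorUnitary :
        Matrix (Fin n) (Fin n) ℂ)).trace).re

noncomputable def mpow {n : ℕ} {A : Matrix (Fin n) (Fin n) ℂ} (hA : A.PosSemidef) (s : ℝ) :
    Matrix (Fin n) (Fin n) ℂ :=
  hA.1.cfc (fun x => if x = 0 then 0 else x ^ s)

namespace Stmt17Aux
variable {n : ℕ}
open scoped MatrixOrder

lemma trace_re_nonneg {M : Matrix (Fin n) (Fin n) ℂ} (hM : M.PosSemidef) :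
    0 ≤ (M.trace).re := by
  rw [Matrix.trace, Complex.re_sum]
  apply Finset.sum_nonneg
  intro i _
  have h := hM.diag_nonneg (i := i)
  simpa [Matrix.diag] using (Complex.le_def.mp h).1

lemma trace_mul_re_nonneg {X Y : Matrix (Fin n) (Fin n) ℂ}
    (hX : X.PosSemidef) (hY : Y.PosSemidef) : 0 ≤ ((X * Y).trace).re := by
  have hs := (CFC.sqrt_nonneg X).posSemidef
  have h1 : X * Y = CFC.sqrt X * (CFC.sqrt X * Y) := by
    rw [← mul_assoc, CFC.sqrt_mul_sqrt_self X hX.nonneg]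
  have h2 : (X * Y).trace = (CFC.sqrt X * Y * CFC.sqrt X).trace := by
    rw [h1, Matrix.trace_mul_comm, mul_assoc]
  rw [h2]
  have : (CFC.sqrt X * Y * CFC.sqrt X).PosSemidef := by
    have := hY.conjTranspose_mul_mul_same (CFC.sqrt X)
    rwa [hs.1.eq] at this
  exact trace_re_nonneg this

lemma diag_fun_eq {A : Matrix (Fin n) (Fin n) ℂ} (hA : A.IsHermitian) (f g : ℝ → ℝ)
    (h : ∀ x, f x = g x) :
    (RCLike.ofReal ∘ f ∘ hA.eigenvalues : Fin n → ℂ) = RCLike.ofReal ∘ g ∘ hA.eigenvalues := by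
  funext i; simp [h]

lemma cfc_mul {A : Matrix (Fin n) (Fin n) ℂ} (hA : A.IsHermitian) (f g : ℝ → ℝ) :
    hA.cfc f * hA.cfc g = hA.cfc (fun x => f x * g x) := by
  unfold Matrix.IsHermitian.cfc
  have h : (star hA.eigenvectorUnitary : Matrix (Fin n) (Fin n) ℂ) * hA.eigenvectorUnitary = 1 :=
    Unitary.coe_star_mul_self _
  have key : (fun i => (RCLike.ofReal ∘ f ∘ hA.eigenvalues) i *
      (RCLike.ofReal ∘ g ∘ hA.eigenvalues) i)
      = (RCLike.ofReal ∘ (fun x => f x * g x) ∘ hA.eigenvalues : Fin n → ℂ) := by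
    funext i; simp
  calc (hA.eigenvectorUnitary : Matrix (Fin n) (Fin n) ℂ) *
        diagonal (RCLike.ofReal ∘ f ∘ hA.eigenvalues) *
        (star hA.eigenvectorUnitary : Matrix (Fin n) (Fin n) ℂ) *
        ((hA.eigenvectorUnitary : Matrix (Fin n) (Fin n) ℂ) *
        diagonal (RCLike.ofReal ∘ g ∘ hA.eigenvalues) *
        (star hA.eigenvectorUnitary : Matrix (Fin n) (Fin n) ℂ))
      = (hA.eigenvectorUnitary : Matrix (Fin n) (Fin n) ℂ) *
        (diagonal (RCLike.ofReal ∘ f ∘ hA.eigenvalues) *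
         diagonal (RCLike.ofReal ∘ g ∘ hA.eigenvalues)) *
        (star hA.eigenvectorUnitary : Matrix (Fin n) (Fin n) ℂ) := by
        simp only [mul_assoc]
        rw [← mul_assoc (star hA.eigenvectorUnitary : Matrix (Fin n) (Fin n) ℂ), h, one_mul]
    _ = _ := by rw [diagonal_mul_diagonal, key, Unitary.conjStarAlgAut_apply]

lemma cfc_sub {A : Matrix (Fin n) (Fin n) ℂ} (hA : A.IsHermitian) (f g : ℝ → ℝ) :
    hA.cfc f - hA.cfc g = hA.cfc (fun x => f x - g x) := by
  simp only [Matrix.IsHermitian.cfc, Unitary.conjStarAlgAut_apply]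
  rw [← sub_mul, ← mul_sub, diagonal_sub]
  have key : (fun i => (RCLike.ofReal ∘ f ∘ hA.eigenvalues) i -
      (RCLike.ofReal ∘ g ∘ hA.eigenvalues) i)
      = (RCLike.ofReal ∘ (fun x => f x - g x) ∘ hA.eigenvalues : Fin n → ℂ) := by
    funext i; simp
  rw [key]

lemma cfc_add {A : Matrix (Fin n) (Fin n) ℂ} (hA : A.IsHermitian) (f g : ℝ → ℝ) :
    hA.cfc f + hA.cfc g = hA.cfc (fun x => f x + g x) := by
  simp only [Matrix.IsHermitian.cfc, Unitary.conjStarAlgAut_apply]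
  rw [← add_mul, ← mul_add, diagonal_add]
  have key : (fun i => (RCLike.ofReal ∘ f ∘ hA.eigenvalues) i +
      (RCLike.ofReal ∘ g ∘ hA.eigenvalues) i)
      = (RCLike.ofReal ∘ (fun x => f x + g x) ∘ hA.eigenvalues : Fin n → ℂ) := by
    funext i; simp
  rw [key]

lemma cfc_id {A : Matrix (Fin n) (Fin n) ℂ} (hA : A.IsHermitian) :
    hA.cfc (fun x => x) = A := by
  unfold Matrix.IsHermitian.cfc
  exact hA.spectral_theorem.symm

lemma cfc_psd {A : Matrix (Fin n) (Fin n) ℂ} (hA : A.IsHermitian) (f : ℝ → ℝ)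
    (hf : ∀ x, 0 ≤ f x) : (hA.cfc f).PosSemidef := by
  unfold Matrix.IsHermitian.cfc
  apply Matrix.PosSemidef.mul_mul_conjTranspose_same
  refine posSemidef_diagonal_iff.mpr fun i => ?_
  rw [Function.comp_apply, RCLike.nonneg_iff]
  constructor
  · simpa using hf _
  · simp

lemma cfc_trace {A : Matrix (Fin n) (Fin n) ℂ} (hA : A.IsHermitian) (f : ℝ → ℝ) :
    (hA.cfc f).trace = ∑ i, (f (hA.eigenvalues i) : ℂ) := by
  simp only [Matrix.IsHermitian.cfc, Unitary.conjStarAlgAut_apply]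
  rw [Matrix.trace_mul_cycle, Unitary.coe_star_mul_self, one_mul, Matrix.trace_diagonal]
  rfl

lemma cfc_trace_re {A : Matrix (Fin n) (Fin n) ℂ} (hA : A.IsHermitian) (f : ℝ → ℝ) :
    ((hA.cfc f).trace).re = ∑ i, f (hA.eigenvalues i) := by
  rw [cfc_trace, Complex.re_sum]
  simp

lemma traceNorm_eq_of_sq {X B : Matrix (Fin n) (Fin n) ℂ} (hB : B.PosSemidef)
    (h : B ^ 2 = Xᴴ * X) : traceNorm X = (B.trace).re := by
  have hC := Matrix.posSemidef_conjTranspose_mul_self X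
  have hBs : B = CFC.sqrt (Xᴴ * X) := (CFC.sqrt_unique (by rw [← sq]; exact h) hB.nonneg).symm
  rw [hBs, CFC.sqrt_eq_real_sqrt _ hC.nonneg, cfcₙ_eq_cfc, hC.1.cfc_eq, traceNorm]
  simp only [Matrix.IsHermitian.cfc, Unitary.conjStarAlgAut_apply]
  rfl

end Stmt17Aux

theorem stmt17 {n : ℕ} {ρ σ Λ ρt : Matrix (Fin n) (Fin n) ℂ}
    (hρ : ρ.PosSemidef) (hρ1 : ρ.trace = 1) (hσ : σ.PosDef) (hσ1 : σ.trace = 1)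
    {m k : ℝ} (hm : 0 ≤ m) (hk : 0 ≤ k)
    (hΛ : Λ.PosSemidef) (hΛI : (1 - Λ).PosSemidef) (hΛσ : ((Λ * σ).trace).re ≤ (2:ℝ) ^ (-m))
    (hρt : ρt.PosSemidef) (hρt1 : ρt.trace = 1) (hρtσ : ((2:ℝ) ^ k • σ - ρt).PosSemidef)
    {ε₁ ε₂ : ℝ} (hε₁ : ε₁ = 1 - ((Λ * ρ).trace).re) (hε₂ : ε₂ = (1/2) * traceNorm (ρt - ρ))
    (hsum : ε₁ + ε₂ < 1) :
    m ≤ k + Real.logb 2 (1/(1 - ε₁ - ε₂)) := by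
  classical
  have hA : (ρt - ρ).IsHermitian := hρt.1.sub hρ.1
  set μ := hA.eigenvalues with hμdef
  set P := hA.cfc (fun x => max x 0) with hPdef
  set N := hA.cfc (fun x => max (-x) 0) with hNdef
  have hP : P.PosSemidef := Stmt17Aux.cfc_psd hA _ (fun x => le_max_right x 0)
  have hN : N.PosSemidef := Stmt17Aux.cfc_psd hA _ (fun x => le_max_right (-x) 0)
  have hPN : P - N = ρt - ρ := by
    rw [hPdef, hNdef, Stmt17Aux.cfc_sub]
    have h : (fun x : ℝ => max x 0 - max (-x) 0) = (fun x : ℝ => x) := by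
      funext x; exact max_zero_sub_max_neg_zero_eq_self x
    rw [h, Stmt17Aux.cfc_id]
  -- trace norm computation
  have hsq : (P + N) ^ 2 = (ρt - ρ)ᴴ * (ρt - ρ) := by
    rw [sq, hPdef, hNdef, Stmt17Aux.cfc_add, Stmt17Aux.cfc_mul]
    have h : (fun x : ℝ => (max x 0 + max (-x) 0) * (max x 0 + max (-x) 0))
        = (fun x : ℝ => x * x) := by
      funext x
      have habs : max x 0 + max (-x) 0 = |x| := by
        rcases le_total 0 x with h | h
        · rw [max_eq_left h, max_eq_right (neg_nonpos.mpr h), add_zero, abs_of_nonneg h]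
        · rw [max_eq_right h, max_eq_left (neg_nonneg.mpr h), zero_add, abs_of_nonpos h]
      rw [habs, abs_mul_abs_self]
    rw [h]
    have h2 : hA.cfc (fun x : ℝ => x * x) = (ρt - ρ) * (ρt - ρ) := by
      rw [← Stmt17Aux.cfc_mul, Stmt17Aux.cfc_id]
    rw [h2, hA.eq]
  have hPNsqrt : traceNorm (ρt - ρ) = ((P + N).trace).re :=
    Stmt17Aux.traceNorm_eq_of_sq (hP.add hN) hsq
  have htn : traceNorm (ρt - ρ) = ∑ i, (max (μ i) 0 + max (-(μ i)) 0) := by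
    rw [hPNsqrt, hPdef, hNdef, Stmt17Aux.cfc_add, Stmt17Aux.cfc_trace_re]
  -- trace zero: sum of positive parts = sum of negative parts
  have h0 : ((P - N).trace).re = 0 := by
    rw [hPN, trace_sub, hρt1, hρ1]; simp
  rw [trace_sub, Complex.sub_re, hPdef, hNdef, Stmt17Aux.cfc_trace_re,
    Stmt17Aux.cfc_trace_re] at h0
  have hNtr : (N.trace).re = ∑ i, max (-(μ i)) 0 := by
    rw [hNdef, Stmt17Aux.cfc_trace_re]
  have hPtr : (P.trace).re = ∑ i, max (μ i) 0 := by
    rw [hPdef, Stmt17Aux.cfc_trace_re]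
  have hε2N : ε₂ = (N.trace).re := by
    rw [hε₂, htn, Finset.sum_add_distrib, hNtr]
    have := h0
    linarith
  -- lower bound on re Tr[Λ ρt]
  have hbaeq : Λ * ρt - Λ * ρ = Λ * P - Λ * N := by
    rw [← mul_sub, ← mul_sub, hPN]
  have hba : ((Λ * ρt).trace).re - ((Λ * ρ).trace).re
      = ((Λ * P).trace).re - ((Λ * N).trace).re := by
    have h := congrArg (fun M : Matrix (Fin n) (Fin n) ℂ => (M.trace).re) hbaeq
    simpa [trace_sub, Complex.sub_re] using h
  have hΛP := Stmt17Aux.trace_mul_re_nonneg hΛ hP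
  have hΛN : ((Λ * N).trace).re ≤ (N.trace).re := by
    have h := Stmt17Aux.trace_mul_re_nonneg hΛI hN
    have hexp : (1 - Λ) * N = N - Λ * N := by rw [sub_mul, one_mul]
    rw [hexp, trace_sub, Complex.sub_re] at h
    linarith
  have h5 : 1 - ε₁ - ε₂ ≤ ((Λ * ρt).trace).re := by
    rw [hε₁, hε2N]; linarith
  -- upper bound on re Tr[Λ ρt]
  have h6 := Stmt17Aux.trace_mul_re_nonneg hΛ hρtσ
  have hexp2 : Λ * ((2:ℝ) ^ k • σ - ρt) = (2:ℝ) ^ k • (Λ * σ) - Λ * ρt := by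
    rw [mul_sub, Matrix.mul_smul]
  rw [hexp2, trace_sub, Matrix.trace_smul, Complex.sub_re, Complex.smul_re, smul_eq_mul] at h6
  have h2k : (0:ℝ) < (2:ℝ) ^ k := Real.rpow_pos_of_pos two_pos k
  have h7 : ((Λ * ρt).trace).re ≤ (2:ℝ) ^ k * (2:ℝ) ^ (-m) := by
    have := mul_le_mul_of_nonneg_left hΛσ h2k.le
    linarith
  have key : 1 - ε₁ - ε₂ ≤ (2:ℝ) ^ (k - m) := by
    have : (2:ℝ) ^ k * (2:ℝ) ^ (-m) = (2:ℝ) ^ (k - m) := by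
      rw [← Real.rpow_add two_pos]; ring_nf
    linarith
  have hpos : 0 < 1 - ε₁ - ε₂ := by linarith
  have hlog : Real.logb 2 (1 - ε₁ - ε₂) ≤ k - m := by
    calc Real.logb 2 (1 - ε₁ - ε₂) ≤ Real.logb 2 ((2:ℝ) ^ (k - m)) :=
          Real.logb_le_logb_of_le one_lt_two hpos key
      _ = k - m := Real.logb_rpow two_pos (by norm_num)
  rw [one_div, Real.logb_inv]
  linarith
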